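/- arXiv:1112.2791 — 3 statements merged into one kernel-verified Lean document; each statement's English description precedes it below -/
import Mathlib

section
/- For real numbers h_m > h_e > 0 and P ≥ 0, the secrecy rate R_s(P) = log(1 + P·h_m) − log(1 + P·h_e) is a strictly concave function of P on [0, ∞). -/
/-!
On `P ≥ 0` the derivative of `log (1 + P * a) - log (1 + P * b)` is
`(a - b) / ((1 + P * a) * (1 + P * b))`: a positive constant over a positive, strictly increasing
denominator when `0 ≤ b < a`. A strictly decreasing derivative gives strict concavity.
-/

open Real Set

theorem hasDerivAt_log_one_add_mul {a x : ℝ} (hx : 1 + x * a ≠ 0) :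
    HasDerivAt (fun P : ℝ => log (1 + P * a)) (a / (1 + x * a)) x := by
  have h : HasDerivAt (fun P : ℝ => 1 + P * a) a x := by
    simpa using ((hasDerivAt_id x).mul_const a).const_add 1
  exact h.log hx

theorem hasDerivAt_log_one_add_mul_sub_log_one_add_mul {a b x : ℝ}
    (ha : 1 + x * a ≠ 0) (hb : 1 + x * b ≠ 0) :
    HasDerivAt (fun P : ℝ => log (1 + P * a) - log (1 + P * b))
      ((a - b) / ((1 + x * a) * (1 + x * b))) x := by
  refine ((hasDerivAt_log_one_add_mul ha).sub (hasDerivAt_log_one_add_mul hb)).congr_deriv ?_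
  rw [div_sub_div _ _ ha hb]
  congr 1
  ring

theorem strictAntiOn_div_one_add_mul_mul_one_add_mul {a b : ℝ} (hb : 0 ≤ b) (hba : b < a) :
    StrictAntiOn (fun x : ℝ => (a - b) / ((1 + x * a) * (1 + x * b))) (Ici 0) := by
  intro x (hx : 0 ≤ x) y (hy : 0 ≤ y) hxy
  have ha : 0 < a := hb.trans_lt hba
  have hden : (1 + x * a) * (1 + x * b) < (1 + y * a) * (1 + y * b) := by
    have hxa : 1 + x * a < 1 + y * a := by gcongr
    have hxb : 1 + x * b ≤ 1 + y * b := by gcongr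
    exact mul_lt_mul hxa hxb (by positivity) (by positivity)
  exact div_lt_div_of_pos_left (sub_pos.2 hba) (by positivity) hden

/-- For `h_m > h_e > 0`, the secrecy rate `P ↦ log(1+P·h_m) − log(1+P·h_e)` is
strictly concave on `[0,∞)`. -/
theorem secrecy_rate_strictConcave (hm he : ℝ) (hhe : 0 < he) (hlt : he < hm) :
    StrictConcaveOn ℝ (Set.Ici (0 : ℝ))
      (fun P : ℝ => Real.log (1 + P * hm) - Real.log (1 + P * he)) := by
  have hm0 : 0 < hm := hhe.trans hlt
  have hderiv : ∀ P ∈ Ici (0 : ℝ), HasDerivAt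
      (fun P : ℝ => log (1 + P * hm) - log (1 + P * he))
      ((hm - he) / ((1 + P * hm) * (1 + P * he))) P := fun P (hP : 0 ≤ P) =>
    hasDerivAt_log_one_add_mul_sub_log_one_add_mul (by positivity) (by positivity)
  refine StrictAntiOn.strictConcaveOn_of_deriv (convex_Ici 0)
    (fun P hP => (hderiv P hP).continuousAt.continuousWithinAt) ?_
  rw [interior_Ici]
  exact ((strictAntiOn_div_one_add_mul_mul_one_add_mul hhe.le hlt).mono Ioi_subset_Ici_self).congr
    fun P hP => (hderiv P (Ioi_subset_Ici_self hP)).deriv.symm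
end

section
/- Let ε ∈ [0,1) and suppose the map R ↦ g(R) is continuous and non-increasing on (0, R_max] with g(R_max) ≤ (1−ε)·R_max, g(R) > 0 for some R, and lim_{R→0⁺} g(R)/R = ∞. Then there exists a unique R* ∈ (0, R_max] with R* = g(R*)/(1−ε). -/
/-!
Write `k = 1 - ε > 0`; the fixed points are the zeros of `R ↦ g R - k R`. Since `g R / R → ∞`
as `R → 0⁺`, this difference is nonnegative at some small `a`, and it is nonpositive at `Rmax`,
so the intermediate value theorem gives a zero in `[a, Rmax]`. It is unique because `g` is
antitone while `k R` is strictly increasing.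
-/

open Filter Set Topology

lemma exists_mem_Ioo_mul_le_of_tendsto_div_atTop {g : ℝ → ℝ} {b : ℝ} (k : ℝ) (hb : 0 < b)
    (hlim : Tendsto (fun x => g x / x) (𝓝[>] 0) atTop) : ∃ a ∈ Ioo 0 b, k * a ≤ g a := by
  have hsmall : ∀ᶠ x in 𝓝[>] 0, x ∈ Ioo 0 b := Ioo_mem_nhdsGT hb
  obtain ⟨a, ha, hka⟩ := (hsmall.and (hlim.eventually_ge_atTop k)).exists
  exact ⟨a, ha, (le_div_iff₀ ha.1).mp hka⟩

lemma exists_mem_Ioc_apply_eq_mul_of_tendsto_div_atTop {g : ℝ → ℝ} {b k : ℝ} (hb : 0 < b)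
    (hcont : ContinuousOn g (Ioc 0 b)) (hend : g b ≤ k * b)
    (hlim : Tendsto (fun x => g x / x) (𝓝[>] 0) atTop) : ∃ c ∈ Ioc 0 b, g c = k * c := by
  obtain ⟨a, ⟨ha0, hab⟩, hka⟩ := exists_mem_Ioo_mul_le_of_tendsto_div_atTop k hb hlim
  have hsub : Icc a b ⊆ Ioc 0 b := Icc_subset_Ioc_iff hab.le |>.2 ⟨ha0, le_rfl⟩
  obtain ⟨c, hc, hkc⟩ := isPreconnected_Icc.intermediate_value₂ (left_mem_Icc.2 hab.le)
    (right_mem_Icc.2 hab.le) (continuousOn_const.mul continuousOn_id) (hcont.mono hsub) hka hend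
  exact ⟨c, hsub hc, hkc.symm⟩

lemma AntitoneOn.eq_of_apply_eq_mul {α : Type*} [Field α] [LinearOrder α] [IsStrictOrderedRing α]
    {g : α → α} {s : Set α} {k x y : α} (hg : AntitoneOn g s) (hk : 0 < k)
    (hx : x ∈ s) (hy : y ∈ s) (hgx : g x = k * x) (hgy : g y = k * y) : x = y := by
  have hle : ∀ {u v}, u ∈ s → v ∈ s → g u = k * u → g v = k * v → u ≤ v → v ≤ u :=
    fun hu hv hgu hgv huv => le_of_mul_le_mul_left (hgu ▸ hgv ▸ hg hu hv huv) hk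
  rcases le_total x y with hxy | hyx
  · exact le_antisymm hxy (hle hx hy hgx hgy hxy)
  · exact le_antisymm (hle hy hx hgy hgx hyx) hyx

theorem capacity_fixed_point_exists_unique_general (g : ℝ → ℝ) (Rmax ε : ℝ)
    (hε1 : ε < 1) (hRmax : 0 < Rmax)
    (hcont : ContinuousOn g (Set.Ioc 0 Rmax))
    (hmono : AntitoneOn g (Set.Ioc 0 Rmax))
    (hend : g Rmax ≤ (1 - ε) * Rmax)
    (hlim : Filter.Tendsto (fun R => g R / R) (nhdsWithin 0 (Set.Ioi 0))
      Filter.atTop) :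
    ∃! R : ℝ, R ∈ Set.Ioc (0 : ℝ) Rmax ∧ R = g R / (1 - ε) := by
  have hk : 0 < 1 - ε := sub_pos.2 hε1
  have hfixed : ∀ R, R = g R / (1 - ε) ↔ g R = (1 - ε) * R := fun R => by
    rw [eq_div_iff hk.ne', mul_comm, eq_comm]
  obtain ⟨c, hc, hgc⟩ := exists_mem_Ioc_apply_eq_mul_of_tendsto_div_atTop hRmax hcont hend hlim
  refine ⟨c, ⟨hc, (hfixed c).2 hgc⟩, fun y ⟨hy, hyg⟩ => ?_⟩
  exact hmono.eq_of_apply_eq_mul hk hy hc ((hfixed y).1 hyg) hgc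

/-- Fixed-point existence and uniqueness for the secrecy-capacity equation
`R = g(R)/(1−ε)`. -/
theorem capacity_fixed_point_exists_unique (g : ℝ → ℝ) (Rmax ε : ℝ)
    (hε : 0 ≤ ε) (hε1 : ε < 1) (hRmax : 0 < Rmax)
    (hcont : ContinuousOn g (Set.Ioc 0 Rmax))
    (hmono : AntitoneOn g (Set.Ioc 0 Rmax))
    (hend : g Rmax ≤ (1 - ε) * Rmax)
    (hpos : ∃ R ∈ Set.Ioc (0 : ℝ) Rmax, 0 < g R)
    (hlim : Filter.Tendsto (fun R => g R / R) (nhdsWithin 0 (Set.Ioi 0))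
      Filter.atTop) :
    ∃! R : ℝ, R ∈ Set.Ioc (0 : ℝ) Rmax ∧ R = g R / (1 - ε) :=
  capacity_fixed_point_exists_unique_general g Rmax ε hε1 hRmax hcont hmono hend hlim
end

section
/- Consider two queue recursions with common initial condition Q(1) = Q'(1) = 0 and common driving sequences: Q(t+1) = Q(t) + A_t − R·1{I_t = 1 and Q(t) + A_t − R ≥ 0}, and Q'(t+1) = ( Q'(t) + A_t − R·1{I_t = 1} )⁺, where A_t ≥ 0 and R > 0. Then Q(t) ≤ Q'(t) + R for all t ≥ 1. -/
/-!
The invariant `Q ≤ Q' + R` survives each step. If the key queue consumes, both queues lose `R`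
and the Lindley reflection only helps. If it skips because of a key outage, then
`Q + A < R`, while the reflected Lindley queue is nonnegative. If nothing is requested, both
queues gain the same `A`.
-/

theorem key_queue_step_le_lindley_step_add {q q' a R : ℝ} (b : Bool) (h : q ≤ q' + R) :
    q + a - (if b = true ∧ 0 ≤ q + a - R then R else 0) ≤
      max (q' + a - (if b = true then R else 0)) 0 + R := by
  by_cases hb : b = true
  · by_cases hkey : 0 ≤ q + a - R
    · rw [if_pos ⟨hb, hkey⟩, if_pos hb]
      linarith [le_max_left (q' + a - R) 0]
    · rw [if_neg (fun h ↦ hkey h.2), if_pos hb]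
      linarith [le_max_right (q' + a - R) 0]
  · rw [if_neg (fun h ↦ hb h.1), if_neg hb]
    linarith [le_max_left (q' + a - 0) 0]

theorem key_queue_lindley_comparison_general (A : ℕ → ℝ) (I : ℕ → Bool) (R : ℝ)
    (Q Q' : ℕ → ℝ) (hR : 0 < R)
    (hQ1 : Q 1 = 0) (hQ'1 : Q' 1 = 0)
    (hQ : ∀ t, 1 ≤ t →
      Q (t + 1) = Q t + A t -
        (if I t = true ∧ 0 ≤ Q t + A t - R then R else 0))
    (hQ' : ∀ t, 1 ≤ t →
      Q' (t + 1) = max (Q' t + A t - (if I t = true then R else 0)) 0) :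
    ∀ t, 1 ≤ t → Q t ≤ Q' t + R := by
  intro t ht
  induction t, ht using Nat.le_induction with
  | base => rw [hQ1, hQ'1]; linarith
  | succ n hn ih =>
    rw [hQ n hn, hQ' n hn]
    exact key_queue_step_le_lindley_step_add (I n) ih

/-- Comparison between the infinite-buffer key queue (which skips consumption
upon key outage) and the Lindley recursion: `Q(t) ≤ Q'(t) + R` for all `t ≥ 1`. -/
theorem key_queue_lindley_comparison (A : ℕ → ℝ) (I : ℕ → Bool) (R : ℝ)
    (Q Q' : ℕ → ℝ) (hR : 0 < R) (hA : ∀ t, 0 ≤ A t)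
    (hQ1 : Q 1 = 0) (hQ'1 : Q' 1 = 0)
    (hQ : ∀ t, 1 ≤ t →
      Q (t + 1) = Q t + A t -
        (if I t = true ∧ 0 ≤ Q t + A t - R then R else 0))
    (hQ' : ∀ t, 1 ≤ t →
      Q' (t + 1) = max (Q' t + A t - (if I t = true then R else 0)) 0) :
    ∀ t, 1 ≤ t → Q t ≤ Q' t + R :=
  key_queue_lindley_comparison_general A I R Q Q' hR hQ1 hQ'1 hQ hQ'
end
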